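/- Let G₇ = ZMod 2 × (ZMod 4 × ZMod 2). The map θ : G₇ → (Fin 4 → ZMod 2) defined by θ(l, (i, j)) = (l | φ₂(i, j)), where ( · | · ) denotes concatenation, is a Gray map on G₇. -/

import Mathlib

/-! θ arises from φ₁ by prepending a `ZMod 2` coordinate carried by the identity, twice (on the
right factor for φ₂, on the left for θ). Such a coordinate adds the discrete metric of `ZMod 2`
to both sides of each Gray-map condition, so it preserves Gray maps. That φ₁ is a Gray map is a finite check. -/

/-- A map `φ : G → (Fin n → ZMod 2)` on an additive group is a Gray map if
`d_φ(a,b) = w_H(φ (a - b))` is a metric on `G` and `d_φ(a,b) = d_H(φ a, φ b)`. -/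
def IsAddGrayMap {G : Type*} [AddGroup G] {n : ℕ} (φ : G → (Fin n → ZMod 2)) : Prop :=
  (∀ a b : G, hammingNorm (φ (a - b)) = 0 ↔ a = b) ∧
  (∀ a b : G, hammingNorm (φ (a - b)) = hammingNorm (φ (b - a))) ∧
  (∀ a b c : G, hammingNorm (φ (a - c)) ≤
      hammingNorm (φ (a - b)) + hammingNorm (φ (b - c))) ∧
  (∀ a b : G, hammingNorm (φ (a - b)) = hammingDist (φ a) (φ b))

/-- The standard Gray map on `C₄ = ZMod 4`:
`0 ↦ 00, 1 ↦ 01, 2 ↦ 11, 3 ↦ 10`. -/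
def phi1 (i : ZMod 4) : Fin 2 → ZMod 2 :=
  if i = 0 then ![0, 0] else if i = 1 then ![0, 1] else if i = 2 then ![1, 1] else ![1, 0]

/-- The map `φ₂ : ZMod 4 × ZMod 2 → (Fin 3 → ZMod 2)`, `φ₂(i, j) = (j | φ₁ i)`. -/
def phi2 (p : ZMod 4 × ZMod 2) : Fin 3 → ZMod 2 :=
  Matrix.vecCons p.2 (phi1 p.1)

open Matrix

theorem hammingDist_vecCons {α : Type*} [DecidableEq α] {n : ℕ} (a b : α) (v w : Fin n → α) :
    hammingDist (vecCons a v) (vecCons b w) = (if a = b then 0 else 1) + hammingDist v w := by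
  simp only [hammingDist, Finset.card_filter, Fin.sum_univ_succ, cons_val_zero, cons_val_succ,
    ite_not]; congr

theorem hammingNorm_vecCons {α : Type*} [Zero α] [DecidableEq α] {n : ℕ} (a : α) (v : Fin n → α) :
    hammingNorm (vecCons a v) = (if a = 0 then 0 else 1) + hammingNorm v := by
  simp only [hammingNorm, Finset.card_filter, Fin.sum_univ_succ, cons_val_zero, cons_val_succ,
    ite_not]; congr

namespace IsAddGrayMap

variable {G H : Type*} [AddGroup G] [AddGroup H] {n : ℕ} {φ : G → Fin n → ZMod 2}

theorem comp_addEquiv (hφ : IsAddGrayMap φ) (e : H ≃+ G) : IsAddGrayMap (φ ∘ e) := by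
  obtain ⟨hzero, hsymm, htri, hdist⟩ := hφ
  refine ⟨fun a b => ?_, fun a b => ?_, fun a b c => ?_, fun a b => ?_⟩ <;>
    simp only [Function.comp_apply, map_sub]
  · rw [hzero, e.injective.eq_iff]
  · exact hsymm _ _
  · exact htri _ _ _
  · exact hdist _ _

theorem vecCons_fst (hφ : IsAddGrayMap φ) :
    IsAddGrayMap (fun p : ZMod 2 × G => vecCons p.1 (φ p.2)) := by
  obtain ⟨hzero, hsymm, htri, hdist⟩ := hφ
  have hnorm (p q : ZMod 2 × G) : hammingNorm (vecCons (p - q).1 (φ (p - q).2)) =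
      (if p.1 = q.1 then 0 else 1) + hammingNorm (φ (p.2 - q.2)) := by
    simp only [hammingNorm_vecCons, Prod.fst_sub, Prod.snd_sub, sub_eq_zero]
  refine ⟨fun p q => ?_, fun p q => ?_, fun p q r => ?_, fun p q => ?_⟩ <;> simp only [hnorm]
  · by_cases h : p.1 = q.1 <;> simp [h, hzero, Prod.ext_iff]
  · simp only [hsymm p.2, eq_comm (a := p.1)]
  · grind [htri p.2 q.2 r.2]
  · rw [hammingDist_vecCons, hdist]

theorem vecCons_snd (hφ : IsAddGrayMap φ) :
    IsAddGrayMap (fun p : G × ZMod 2 => vecCons p.2 (φ p.1)) :=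
  hφ.vecCons_fst.comp_addEquiv AddEquiv.prodComm

end IsAddGrayMap

theorem isAddGrayMap_phi1 : IsAddGrayMap phi1 := by
  unfold IsAddGrayMap phi1; decide

theorem isAddGrayMap_phi2 : IsAddGrayMap phi2 :=
  isAddGrayMap_phi1.vecCons_snd

/-- Example 6.1: `θ(l, (i,j)) = (l | φ₂(i,j))` is a Gray map on
`G₇ = ZMod 2 × (ZMod 4 × ZMod 2)`. -/
theorem stmt14 :
    IsAddGrayMap (fun p : ZMod 2 × (ZMod 4 × ZMod 2) => Matrix.vecCons p.1 (phi2 p.2)) :=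
  isAddGrayMap_phi2.vecCons_fst
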